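/- Let f be a transcendental entire function, and suppose V is an unbounded component of the Fatou set F(f) that is not periodic (i.e., f^n(V) is not contained in V for any n ≥ 1). Let R > 0 be such that the disc B(0,R) meets J(f). Then infinitely many distinct preimages of V (connected components of f^{-n}(V) over all n ≥ 1) meet B(0,R). -/

import Mathlib

open Filter Topology Set Bornology

noncomputable section

/-- `f : ℂ → ℂ` is a transcendental entire function: it is differentiable on all of `ℂ`
and is not a polynomial. -/
def TranscendentalEntire (f : ℂ → ℂ) : Prop :=
  Differentiable ℂ f ∧ ¬ ∃ p : Polynomial ℂ, ∀ z, f z = p.eval z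

/-- The spherical (chordal) metric on the Riemann sphere `ℂ ∪ {∞}`, realised as `OnePoint ℂ`. -/
noncomputable def sphericalDist : OnePoint ℂ → OnePoint ℂ → ℝ := fun u v =>
  match u, v with
  | (some z), (some w) => 2 * dist z w / (Real.sqrt (1 + ‖z‖ ^ 2) * Real.sqrt (1 + ‖w‖ ^ 2))
  | (some z), none => 2 / Real.sqrt (1 + ‖z‖ ^ 2)
  | none, (some w) => 2 / Real.sqrt (1 + ‖w‖ ^ 2)
  | none, none => 0

/-- The Fatou set of `f`: the set of points `z` having a neighbourhood `U` on which the
family of iterates of `f` is normal, i.e. every sequence of iterates has a subsequence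
converging uniformly on every compact subset of `U` (hence locally uniformly on `U`)
with respect to the spherical metric on the Riemann sphere `ℂ ∪ {∞}`. -/
def FatouSet (f : ℂ → ℂ) : Set ℂ :=
  {z | ∃ U ∈ 𝓝 z, ∀ s : ℕ → ℕ, StrictMono s → ∃ t : ℕ → ℕ, StrictMono t ∧
    ∃ g : ℂ → OnePoint ℂ, ∀ K ⊆ U, IsCompact K → ∀ ε > 0, ∀ᶠ k in atTop,
      ∀ w ∈ K, sphericalDist (f^[s (t k)] w : ℂ) (g w) < ε}

/-- The Julia set of `f` is the complement of the Fatou set. -/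
def JuliaSet (f : ℂ → ℂ) : Set ℂ := (FatouSet f)ᶜ

/-- `U` is a Fatou component of `f`: a connected component of the Fatou set. -/
def IsFatouComponent (f : ℂ → ℂ) (U : Set ℂ) : Prop :=
  ∃ z ∈ FatouSet f, U = connectedComponentIn (FatouSet f) z

/-- A set `E ⊆ ℂ` is a spider's web if it is connected and there is a sequence of bounded,
simply connected domains `G k` with `G k ⊆ G (k+1)`, `∂(G k) ⊆ E`, and `⋃ k, G k = ℂ`. -/
def SpidersWeb (E : Set ℂ) : Prop :=
  IsConnected E ∧ ∃ G : ℕ → Set ℂ,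
    (∀ k, IsOpen (G k) ∧ IsConnected (G k) ∧ IsBounded (G k) ∧ SimplyConnectedSpace (G k)) ∧
    (∀ k, G k ⊆ G (k + 1)) ∧ (∀ k, frontier (G k) ⊆ E) ∧ (⋃ k, G k) = univ

/-- `X` is locally connected at `z`: every neighbourhood of `z` in the subspace `X`
contains a connected (not necessarily open) neighbourhood of `z` in `X`. -/
def LocallyConnectedAt (X : Set ℂ) (z : ℂ) : Prop :=
  ∀ V ∈ 𝓝[X] z, ∃ W ∈ 𝓝[X] z, W ⊆ V ∧ W ⊆ X ∧ IsConnected W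

/-- `z` is a buried point of `f`: it lies in the Julia set but not on the boundary of
any Fatou component. -/
def BuriedPoint (f : ℂ → ℂ) (z : ℂ) : Prop :=
  z ∈ JuliaSet f ∧ ∀ U : Set ℂ, IsFatouComponent f U → z ∉ frontier U

/-- The residual Julia set: the set of buried points. -/
def ResidualJuliaSet (f : ℂ → ℂ) : Set ℂ := {z | BuriedPoint f z}

/-- A set `S ⊆ ℂ` surrounds a point `z` if `z` lies in a bounded connected component of
the complement of `S`. -/
def Surrounds (S : Set ℂ) (z : ℂ) : Prop :=
  z ∈ Sᶜ ∧ IsBounded (connectedComponentIn Sᶜ z)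

/-- A Jordan curve: a subset of `ℂ` homeomorphic to a circle. -/
def IsJordanCurve (C : Set ℂ) : Prop :=
  Nonempty (C ≃ₜ Metric.sphere (0 : ℂ) 1)

/-- The spherical diameter of a subset of `ℂ`, with respect to the chordal metric on the
Riemann sphere. -/
noncomputable def sphericalDiam (S : Set ℂ) : ℝ :=
  sSup ((fun p : ℂ × ℂ => sphericalDist (p.1 : OnePoint ℂ) (p.2 : OnePoint ℂ)) '' (S ×ˢ S))


/-!
If only finitely many iterates sent a point of `B(0,R)` into `V`, the iterates would eventually
omit a disc `B(a,r) ⊆ V` on `B(0,R)`. Then `1 / (f^[n] - a)` is a uniformly bounded family of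
holomorphic functions, hence normal by Montel's theorem, and `u ↦ a + 1/u` is Lipschitz into the
Riemann sphere, so the iterates `f^[n]` would be normal near a point of `J(f)`.

So there are infinitely many `n` and points `w ∈ B(0,R)` with `f^[n] w ∈ V`, and the components of
`f^{-n}(V)` containing them are pairwise distinct: if two coincide for `n < m`, then the point
`x = f^[n] w` of `V` also has `f^[m-n] x ∈ V`, and since `f` maps Fatou components into Fatou
components, `f^[m-n] '' V ⊆ V`, contradicting non-periodicity.
-/

open Metric
open scoped OnePoint BoundedContinuousFunction

lemma sphericalDist_comm (u v : OnePoint ℂ) : sphericalDist u v = sphericalDist v u := by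
  cases u <;> cases v <;> simp only [sphericalDist, dist_comm, mul_comm]

lemma norm_sub_sq_le (z w : ℂ) : ‖z - w‖ ^ 2 ≤ 2 * (1 + ‖w‖ ^ 2) * (1 + ‖z‖ ^ 2) := by
  have h := norm_sub_le z w
  nlinarith [norm_nonneg (z - w), sq_nonneg (‖z‖ - ‖w‖), sq_nonneg (‖z‖ * ‖w‖)]

def addInv (a u : ℂ) : OnePoint ℂ := if u = 0 then ∞ else ↑(a + u⁻¹)

lemma addInv_inv_sub {a z : ℂ} (hz : z ≠ a) : addInv a (z - a)⁻¹ = z := by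
  simp [addInv, sub_ne_zero.2 hz]

lemma one_le_mul_sq_norm_mul_sqrt (a : ℂ) {u : ℂ} (hu : u ≠ 0) :
    1 ≤ 2 * (1 + ‖a‖ ^ 2) * (‖u‖ * Real.sqrt (1 + ‖a + u⁻¹‖ ^ 2)) ^ 2 := by
  have h := mul_le_mul_of_nonneg_right (norm_sub_sq_le (a + u⁻¹) a) (sq_nonneg ‖u‖)
  rw [add_sub_cancel_left, norm_inv, inv_pow, inv_mul_cancel₀ (by positivity)] at h
  rw [mul_pow, Real.sq_sqrt (by positivity)]
  linarith

lemma sphericalDist_addInv_le (a u v : ℂ) :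
    sphericalDist (addInv a u) (addInv a v) ≤ 4 * (1 + ‖a‖ ^ 2) * ‖u - v‖ := by
  wlog hu : u ≠ 0 generalizing u v
  · rw [not_not] at hu
    subst hu
    rcases eq_or_ne v 0 with rfl | hv
    · simp [addInv, sphericalDist]
    · rw [sphericalDist_comm, norm_sub_rev]
      exact this v 0 hv
  have hA := one_le_mul_sq_norm_mul_sqrt a hu
  have hA₀ : 0 ≤ ‖u‖ * Real.sqrt (1 + ‖a + u⁻¹‖ ^ 2) := by positivity
  rcases eq_or_ne v 0 with rfl | hv
  · simp only [addInv, hu, if_false, if_true, sub_zero]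
    show 2 / _ ≤ _
    rw [div_le_iff₀ (by positivity)]
    nlinarith [sq_nonneg ‖a‖]
  · have hB := one_le_mul_sq_norm_mul_sqrt a hv
    have hB₀ : 0 ≤ ‖v‖ * Real.sqrt (1 + ‖a + v⁻¹‖ ^ 2) := by positivity
    simp only [addInv, hu, hv, if_false]
    show 2 * dist _ _ / _ ≤ _
    have hdist : dist (a + u⁻¹) (a + v⁻¹) = ‖u - v‖ / (‖u‖ * ‖v‖) := by
      rw [dist_add_left, dist_eq_norm, inv_sub_inv hu hv, norm_div, norm_mul, norm_sub_rev]
    rw [hdist, mul_div_assoc', div_div, div_le_iff₀ (by positivity),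
      show ‖u‖ * ‖v‖ * (Real.sqrt (1 + ‖a + u⁻¹‖ ^ 2) * Real.sqrt (1 + ‖a + v⁻¹‖ ^ 2))
        = (‖u‖ * Real.sqrt (1 + ‖a + u⁻¹‖ ^ 2)) * (‖v‖ * Real.sqrt (1 + ‖a + v⁻¹‖ ^ 2)) by ring]
    generalize ‖u‖ * Real.sqrt (1 + ‖a + u⁻¹‖ ^ 2) = x at hA hA₀ ⊢
    generalize ‖v‖ * Real.sqrt (1 + ‖a + v⁻¹‖ ^ 2) = y at hB hB₀ ⊢
    have hxy : 1 ≤ 2 * (1 + ‖a‖ ^ 2) * (x * y) := by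
      have h : 1 ≤ (2 * (1 + ‖a‖ ^ 2) * (x * y)) ^ 2 := by
        nlinarith [mul_le_mul hA hB zero_le_one (by positivity)]
      have h₀ : 0 ≤ 2 * (1 + ‖a‖ ^ 2) * (x * y) := by positivity
      nlinarith
    nlinarith [norm_nonneg (u - v)]

lemma isOpen_fatouSet (f : ℂ → ℂ) : IsOpen (FatouSet f) := by
  refine isOpen_iff_mem_nhds.2 fun z ⟨U, hU, hnormal⟩ => ?_
  filter_upwards [eventually_eventually_nhds.2 hU] with y hy
  exact ⟨U, hy, hnormal⟩

lemma TranscendentalEntire.isOpenMap {f : ℂ → ℂ} (hf : TranscendentalEntire f) :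
    IsOpenMap f := by
  rcases (hf.1.differentiableOn.analyticOnNhd isOpen_univ).is_constant_or_isOpen
    isPreconnected_univ with ⟨w, hw⟩ | hopen
  · exact absurd ⟨Polynomial.C w, fun z => by simpa using hw z trivial⟩ hf.2
  · exact fun s hs => hopen s (subset_univ s) hs

/-- Along the shifted subsequence, the limit at `f x` is the limit at any preimage `x`, so an
arbitrary choice of preimage defines the limit function. -/
lemma mapsTo_fatouSet {f : ℂ → ℂ} (hc : Continuous f) (ho : IsOpenMap f) :
    MapsTo f (FatouSet f) (FatouSet f) := by
  rintro z ⟨U, hU, hnormal⟩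
  obtain ⟨r, hr, hrU⟩ := nhds_basis_closedBall.mem_iff.1 hU
  refine ⟨f '' ball z r, ho.image_mem_nhds (ball_mem_nhds z hr), fun s hs => ?_⟩
  obtain ⟨t, ht, g, hg⟩ := hnormal (s · + 1) (fun _ _ h => Nat.succ_lt_succ (hs h))
  refine ⟨t, ht, g ∘ Function.invFunOn f (closedBall z r), fun K hK hKc ε hε => ?_⟩
  have hK' : IsCompact (f ⁻¹' K ∩ closedBall z r) :=
    (isCompact_closedBall z r).inter_left (hKc.isClosed.preimage hc)
  filter_upwards [hg _ (fun x hx => hrU hx.2) hK' ε hε] with k hk w hw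
  have hw' : w ∈ f '' closedBall z r := image_mono ball_subset_closedBall (hK hw)
  have hfx := Function.invFunOn_eq hw'
  have := hk _ ⟨show f _ ∈ K by rwa [hfx], Function.invFunOn_mem hw'⟩
  rwa [Function.iterate_succ_apply, hfx] at this

lemma dist_le_of_norm_le_on_ball {g : ℂ → ℂ} {c : ℂ} {r M : ℝ} (hr : 0 < r)
    (hd : DifferentiableOn ℂ g (ball c (4 * r))) (hM : ∀ z ∈ ball c (4 * r), ‖g z‖ ≤ M)
    {x y : ℂ} (hx : x ∈ closedBall c r) (hy : y ∈ closedBall c r) :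
    dist (g x) (g y) ≤ 2 * M / (3 * r) * dist x y := by
  rw [mem_closedBall] at hx hy
  have hsub : ball y (3 * r) ⊆ ball c (4 * r) := ball_subset_ball' (by linarith)
  refine Complex.dist_le_div_mul_dist_of_mapsTo_ball (hd.mono hsub) (fun z hz => ?_) ?_
  · rw [mem_closedBall, dist_eq_norm, two_mul]
    exact (norm_sub_le _ _).trans
      (add_le_add (hM z (hsub hz)) (hM y (hsub (mem_ball_self (by positivity)))))
  · rw [mem_ball]
    linarith [dist_triangle_right x y c]

theorem exists_tendstoUniformlyOn_subseq_of_norm_le {h : ℕ → ℂ → ℂ} {c : ℂ} {r M : ℝ}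
    (hr : 0 < r) (hd : ∀ n, DifferentiableOn ℂ (h n) (ball c (4 * r)))
    (hM : ∀ n, ∀ z ∈ ball c (4 * r), ‖h n z‖ ≤ M) :
    ∃ φ : ℕ → ℕ, StrictMono φ ∧ ∃ Φ : ℂ → ℂ,
      TendstoUniformlyOn (fun k => h (φ k)) Φ atTop (closedBall c r) := by
  set D := closedBall c r
  have : CompactSpace D := isCompact_iff_compactSpace.1 (isCompact_closedBall c r)
  have hDsub : D ⊆ ball c (4 * r) := closedBall_subset_ball (by linarith)
  set L := Real.toNNReal (2 * M / (3 * r))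
  have hLip : ∀ n, LipschitzWith L (D.domRestrict (h n)) := fun n =>
    LipschitzWith.of_dist_le_mul fun x y =>
      (dist_le_of_norm_le_on_ball hr (hd n) (hM n) x.2 y.2).trans
        (mul_le_mul_of_nonneg_right (Real.le_coe_toNNReal _) dist_nonneg)
  set H : ℕ → D →ᵇ ℂ := fun n => .mkOfCompact ⟨D.domRestrict (h n), (hLip n).continuous⟩
  have hcompact : IsCompact (closure (range H)) := by
    refine BoundedContinuousFunction.arzela_ascoli (closedBall 0 M) (isCompact_closedBall 0 M)
      _ ?_ ?_
    · rintro _ x ⟨n, rfl⟩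
      simpa [H] using hM n x (hDsub x.2)
    · refine (LipschitzWith.uniformEquicontinuous _ L ?_).equicontinuous
      rintro ⟨_, n, rfl⟩
      exact hLip n
  obtain ⟨Ψ, -, φ, hφ, hlim⟩ := hcompact.tendsto_subseq fun n => subset_closure (mem_range_self n)
  refine ⟨φ, hφ, Function.extend Subtype.val Ψ 0, ?_⟩
  rw [tendstoUniformlyOn_iff_tendstoUniformly_comp_coe, show Function.extend Subtype.val Ψ 0 ∘ Subtype.val = Ψ from
    funext (Subtype.val_injective.extend_apply _ _)]
  exact BoundedContinuousFunction.tendsto_iff_tendstoUniformly.1 hlim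

theorem mem_fatouSet_of_eventually_iterate_notMem_ball {f : ℂ → ℂ} (hd : Differentiable ℂ f)
    {z₀ : ℂ} {U : Set ℂ} (hU : U ∈ 𝓝 z₀) {a : ℂ} {r : ℝ} (hr : 0 < r)
    (H : ∀ᶠ n in atTop, ∀ w ∈ U, f^[n] w ∉ ball a r) : z₀ ∈ FatouSet f := by
  obtain ⟨N, hN⟩ := eventually_atTop.1 H
  obtain ⟨ρ, hρ, hρU⟩ := nhds_basis_ball.mem_iff.1 hU
  have hfar : ∀ n ≥ N, ∀ w ∈ ball z₀ ρ, r ≤ ‖f^[n] w - a‖ := fun n hn w hw => by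
    simpa [mem_ball, dist_eq_norm] using hN n hn w (hρU hw)
  have hne : ∀ n ≥ N, ∀ w ∈ ball z₀ ρ, f^[n] w ≠ a := fun n hn w hw he => by
    simpa [he, hr.not_ge] using hfar n hn w hw
  refine ⟨ball z₀ (ρ / 4), ball_mem_nhds _ (by positivity), fun s hs => ?_⟩
  have hsN : ∀ k, N ≤ s (k + N) := fun k => (Nat.le_add_left N k).trans hs.le_apply
  set h : ℕ → ℂ → ℂ := fun k w => (f^[s (k + N)] w - a)⁻¹
  have hρ4 : 4 * (ρ / 4) = ρ := by ring
  obtain ⟨φ, hφ, Φ, hΦ⟩ := exists_tendstoUniformlyOn_subseq_of_norm_le (h := h) (M := r⁻¹)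
    (by positivity : 0 < ρ / 4)
    (fun k => hρ4 ▸ ((hd.iterate _).differentiableOn.sub_const a).inv
      fun w hw => sub_ne_zero.2 (hne _ (hsN k) w hw))
    (fun k w hw => by
      rw [norm_inv]
      exact inv_anti₀ hr (hfar _ (hsN k) w (hρ4 ▸ hw)))
  refine ⟨(φ · + N), fun _ _ hlt => Nat.add_lt_add_right (hφ hlt) N, addInv a ∘ Φ,
    fun K hK _ ε hε => ?_⟩
  set C := 4 * (1 + ‖a‖ ^ 2)
  filter_upwards [Metric.tendstoUniformlyOn_iff.1 hΦ (ε / C) (by positivity)] with k hk w hw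
  have hwD : w ∈ closedBall z₀ (ρ / 4) := ball_subset_closedBall (hK hw)
  have hwρ : w ∈ ball z₀ ρ := ball_subset_ball (by linarith) (hK hw)
  calc sphericalDist (f^[s (φ k + N)] w) (addInv a (Φ w))
      = sphericalDist (addInv a (h (φ k) w)) (addInv a (Φ w)) := by
        rw [addInv_inv_sub (hne _ (hsN _) w hwρ)]
    _ ≤ C * ‖h (φ k) w - Φ w‖ := sphericalDist_addInv_le a _ _
    _ < C * (ε / C) := by
        rw [← dist_eq_norm, dist_comm]
        gcongr
        exact hk w hwD
    _ = ε := mul_div_cancel₀ ε (by positivity)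

theorem frequently_exists_iterate_mem_of_mem_juliaSet {f : ℂ → ℂ} (hd : Differentiable ℂ f)
    {z₀ : ℂ} (hz₀ : z₀ ∈ JuliaSet f) {U V : Set ℂ} (hU : U ∈ 𝓝 z₀) (hV : (interior V).Nonempty) :
    ∃ᶠ n in atTop, ∃ w ∈ U, f^[n] w ∈ V := by
  obtain ⟨a, ha⟩ := hV
  obtain ⟨r, hr, hrV⟩ := isOpen_iff.1 isOpen_interior a ha
  by_contra hcon
  refine hz₀ (mem_fatouSet_of_eventually_iterate_notMem_ball (a := a) hd hU hr ?_)
  filter_upwards [not_frequently.1 hcon] with n hn w hw hwr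
  exact hn ⟨w, hw, interior_subset (hrV hwr)⟩

lemma image_connectedComponentIn_subset_self {X : Type*} [TopologicalSpace X] {F : Set X}
    {φ : X → X} (hφ : ContinuousOn φ F) (hF : MapsTo φ F F) {x : X}
    (hx : φ x ∈ connectedComponentIn F x) :
    φ '' connectedComponentIn F x ⊆ connectedComponentIn F x :=
  calc φ '' connectedComponentIn F x
      ⊆ connectedComponentIn (φ '' F) (φ x) :=
        hφ.image_connectedComponentIn_subset (connectedComponentIn_nonempty_iff.1 ⟨_, hx⟩)
    _ ⊆ connectedComponentIn F (φ x) := connectedComponentIn_mono _ hF.image_subset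
    _ = connectedComponentIn F x := (connectedComponentIn_eq hx).symm

lemma image_iterate_sub_subset_of_iterate_mem {X : Type*} [TopologicalSpace X] {F : Set X}
    {f : X → X} (hf : Continuous f) (hF : MapsTo f F F) {z w : X} {n m : ℕ} (hnm : n ≤ m)
    (hn : f^[n] w ∈ connectedComponentIn F z) (hm : f^[m] w ∈ connectedComponentIn F z) :
    f^[m - n] '' connectedComponentIn F z ⊆ connectedComponentIn F z := by
  rw [connectedComponentIn_eq hn]
  refine image_connectedComponentIn_subset_self (hf.iterate _).continuousOn (hF.iterate _) ?_
  rwa [← Function.iterate_add_apply, Nat.sub_add_cancel hnm, ← connectedComponentIn_eq hn]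

lemma injOn_connectedComponentIn_preimage_iterate {X : Type*} [TopologicalSpace X] {F : Set X}
    {f : X → X} (hf : Continuous f) (hF : MapsTo f F F) {z : X}
    (hnp : ∀ p, 1 ≤ p → ¬ f^[p] '' connectedComponentIn F z ⊆ connectedComponentIn F z)
    {A : Set ℕ} {w : ℕ → X} (hw : ∀ n ∈ A, f^[n] (w n) ∈ connectedComponentIn F z) :
    InjOn (fun n => connectedComponentIn (f^[n] ⁻¹' connectedComponentIn F z) (w n)) A := by
  have hreturn : ∀ n m, n < m → ∀ x, f^[n] x ∈ connectedComponentIn F z →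
      f^[m] x ∉ connectedComponentIn F z := fun n m hnm x hn hm =>
    hnp (m - n) (by omega) (image_iterate_sub_subset_of_iterate_mem hf hF hnm.le hn hm)
  intro n hn m hm heq
  have hw' : ∀ k ∈ A, w k ∈ connectedComponentIn (f^[k] ⁻¹' connectedComponentIn F z) (w k) :=
    fun k hk => mem_connectedComponentIn (hw k hk)
  simp only at heq
  have hnm := connectedComponentIn_subset (f^[n] ⁻¹' _) _ (heq ▸ hw' m hm)
  have hmn := connectedComponentIn_subset (f^[m] ⁻¹' _) _ (heq ▸ hw' n hn)
  by_contra hne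
  rcases Nat.lt_or_gt_of_ne hne with h | h
  · exact hreturn n m h (w m) hnm (hw m hm)
  · exact hreturn m n h (w n) hmn (hw n hn)

theorem infinitely_many_preimages_meet_ball_general (f : ℂ → ℂ) (hf : TranscendentalEntire f)
    (V : Set ℂ) (hV : IsFatouComponent f V)
    (hnp : ∀ n : ℕ, 1 ≤ n → ¬ f^[n] '' V ⊆ V)
    (R : ℝ) (hJR : (Metric.ball (0 : ℂ) R ∩ JuliaSet f).Nonempty) :
    {W : Set ℂ |
      (∃ n : ℕ, 1 ≤ n ∧ ∃ z ∈ f^[n] ⁻¹' V, W = connectedComponentIn (f^[n] ⁻¹' V) z) ∧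
      (W ∩ Metric.ball (0 : ℂ) R).Nonempty}.Infinite := by
  obtain ⟨z₀, hz₀R, hz₀J⟩ := hJR
  obtain ⟨z, hz, rfl⟩ := hV
  set V := connectedComponentIn (FatouSet f) z
  have hVopen : IsOpen V := (isOpen_fatouSet f).connectedComponentIn
  set A := {n | 1 ≤ n ∧ ∃ w ∈ ball 0 R, f^[n] w ∈ V}
  have hA : A.Infinite := by
    have hfreq := frequently_exists_iterate_mem_of_mem_juliaSet hf.1 hz₀J
      (isOpen_ball.mem_nhds hz₀R)
      (by rw [hVopen.interior_eq]; exact ⟨z, mem_connectedComponentIn hz⟩)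
    exact Nat.frequently_atTop_iff_infinite.1
      ((hfreq.and_eventually (eventually_ge_atTop 1)).mono fun _ h => ⟨h.2, h.1⟩)
  choose! w hwR hwV using fun n (hn : n ∈ A) => hn.2
  refine infinite_of_injOn_mapsTo (injOn_connectedComponentIn_preimage_iterate hf.1.continuous
    (mapsTo_fatouSet hf.1.continuous hf.isOpenMap) hnp hwV) (fun n hn => ?_) hA
  exact ⟨⟨n, hn.1, w n, hwV n hn, rfl⟩, w n, mem_connectedComponentIn (hwV n hn), hwR n hn⟩

/-- If `V` is an unbounded, non-periodic Fatou component of a transcendental entire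
function `f`, and the disc `B(0,R)` meets the Julia set, then infinitely many distinct
preimage components of `V` meet `B(0,R)`. -/
theorem infinitely_many_preimages_meet_ball (f : ℂ → ℂ) (hf : TranscendentalEntire f)
    (V : Set ℂ) (hV : IsFatouComponent f V) (hVunb : ¬ IsBounded V)
    (hnp : ∀ n : ℕ, 1 ≤ n → ¬ f^[n] '' V ⊆ V)
    (R : ℝ) (hR : 0 < R) (hJR : (Metric.ball (0 : ℂ) R ∩ JuliaSet f).Nonempty) :
    {W : Set ℂ |
      (∃ n : ℕ, 1 ≤ n ∧ ∃ z ∈ f^[n] ⁻¹' V, W = connectedComponentIn (f^[n] ⁻¹' V) z) ∧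
      (W ∩ Metric.ball (0 : ℂ) R).Nonempty}.Infinite :=
  infinitely_many_preimages_meet_ball_general f hf V hV hnp R hJR

end
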